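/- arXiv:1005.1307 — 7 statements merged into one kernel-verified Lean document; each statement's English description precedes it below -/
import Mathlib

section
/- Let x > 0 and ε ∈ (0, 1/4). If J is a positive integer with J ≥ J₀ := ⌊−ln(x²ε²/2)/ln 2⌋ + 1, then 0 ≤ F_J(x) − F(x) < 2ε. -/
open MeasureTheory ProbabilityTheory

/-- `F₃(x) = 1 − 2∑_{n=1}^∞ (4n²x² − 1)exp(−2n²x²)`, the cdf of the maximum of a
Brownian excursion. -/
noncomputable def F₃ (x : ℝ) : ℝ :=
  1 - 2 * ∑' n : ℕ, (4 * ((n : ℝ) + 1) ^ 2 * x ^ 2 - 1) *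
      Real.exp (-(2 * ((n : ℝ) + 1) ^ 2 * x ^ 2))

/-!
Symmetrising the series over `ℤ` gives `F₃ y = θ a + 2 a θ' a` for the real theta function
`θ a = ∑_{n ∈ ℤ} exp (-π a n²)` and `a = 2 y² / π`. Differentiating the Poisson summation identity
`√a θ a = θ a⁻¹` turns this into a series with nonnegative terms in `a⁻¹`; with Gaussian tail
bounds this yields `0 ≤ F₃ ≤ 1` and `1 - F₃ y ≤ 16 / y²`.

For the stick-breaking process, `L j = R j - R (j + 1)` with `R j = ∏_{i<j} (1 - U i)` the
remaining stick, so `1 - F₃ (x / √(L j)) ≤ 16 / x² · (R j - R (j + 1))`. Hence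
`N ↦ ∏_{j<N} F₃ (x / √(L j)) - 16 / x² · R N` is nondecreasing, and letting `N → ∞` and taking
expectations, `F_J x - F x ≤ 16 / x² · E[R J] = 16 / x² · 2⁻ᴶ < 8 ε² < 2 ε`.
-/

open Real Filter Topology Set

namespace Excursion

lemma tsum_int_eq_zero_add_two_mul_tsum_succ {f : ℤ → ℝ} (hf : f.Even) (hs : Summable f) :
    ∑' n : ℤ, f n = f 0 + 2 * ∑' n : ℕ, f (n + 1) := by
  rw [tsum_int_eq_zero_add_two_mul_tsum_pnat hf hs, tsum_pnat_eq_tsum_succ (f := fun n : ℕ => f n)]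
  push_cast
  rw [nsmul_eq_mul, Nat.cast_ofNat]

noncomputable def theta (a : ℝ) : ℝ := ∑' n : ℤ, exp (-π * a * n ^ 2)

noncomputable def thetaMoment (a : ℝ) : ℝ := ∑' n : ℤ, π * n ^ 2 * exp (-π * a * n ^ 2)

lemma summable_exp_neg_mul_sq {a : ℝ} (ha : 0 < a) :
    Summable fun n : ℤ => exp (-π * a * n ^ 2) := by
  refine (summable_pow_mul_jacobiTheta₂_term_bound 0 ha 0).congr fun n => ?_
  ring_nf

lemma summable_thetaMoment_term {a : ℝ} (ha : 0 < a) :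
    Summable fun n : ℤ => π * n ^ 2 * exp (-π * a * n ^ 2) := by
  refine ((summable_pow_mul_jacobiTheta₂_term_bound 0 ha 2).mul_left π).congr fun n => ?_
  rw [Int.cast_abs, sq_abs]
  ring_nf

lemma thetaMoment_nonneg (a : ℝ) : 0 ≤ thetaMoment a :=
  tsum_nonneg fun n => by positivity

lemma one_le_theta {a : ℝ} (ha : 0 < a) : 1 ≤ theta a := by
  have := (summable_exp_neg_mul_sq ha).le_tsum 0 fun n _ => (exp_pos _).le
  rwa [Int.cast_zero, zero_pow two_ne_zero, mul_zero, exp_zero] at this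

lemma sqrt_mul_theta {a : ℝ} (ha : 0 < a) : √a * theta a = theta a⁻¹ := by
  rw [theta, tsum_exp_neg_mul_int_sq ha, ← mul_assoc, ← sqrt_eq_rpow, mul_one_div_cancel
    (sqrt_pos.2 ha).ne', one_mul, theta]
  simp only [div_eq_mul_inv]

lemma hasDerivAt_theta {a : ℝ} (ha : 0 < a) : HasDerivAt theta (-thetaMoment a) a := by
  have hderiv : ∀ (n : ℤ), ∀ y ∈ Ioi (a / 2), HasDerivAt (fun z => exp (-π * z * n ^ 2))
      (-(π * n ^ 2 * exp (-π * y * n ^ 2))) y := fun n y _ => by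
    have h : HasDerivAt (fun z : ℝ => -π * z * n ^ 2) (-π * n ^ 2) y := by
      simpa using ((hasDerivAt_id y).const_mul (-π)).mul_const ((n : ℝ) ^ 2)
    convert h.exp using 1
    ring
  have hbound : ∀ (n : ℤ), ∀ y ∈ Ioi (a / 2), ‖-(π * (n : ℝ) ^ 2 * exp (-π * y * n ^ 2))‖ ≤
      π * n ^ 2 * exp (-π * (a / 2) * n ^ 2) := fun n y hy => by
    rw [norm_neg, Real.norm_of_nonneg (by positivity)]
    refine mul_le_mul_of_nonneg_left (exp_le_exp.2 ?_) (by positivity)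
    nlinarith [mul_le_mul_of_nonneg_left (mem_Ioi.1 hy).le (by positivity : 0 ≤ π * (n : ℝ) ^ 2)]
  have ha2 : a ∈ Ioi (a / 2) := by simp [ha]
  have := hasDerivAt_tsum_of_isPreconnected (summable_thetaMoment_term (half_pos ha)) isOpen_Ioi
    isPreconnected_Ioi hderiv hbound ha2 (summable_exp_neg_mul_sq ha) ha2
  rwa [tsum_neg] at this

/-- Differentiating the functional equation `√a θ(a) = θ(1/a)`. -/
lemma theta_sub_two_mul_thetaMoment {a : ℝ} (ha : 0 < a) :
    theta a - 2 * a * thetaMoment a = 2 * √a / a ^ 2 * thetaMoment a⁻¹ := by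
  have hlhs := (hasDerivAt_sqrt ha.ne').mul (hasDerivAt_theta ha)
  have hrhs := (hasDerivAt_theta (inv_pos.2 ha)).comp a (hasDerivAt_inv ha.ne')
  have heq : (fun z => √z * theta z) =ᶠ[𝓝 a] theta ∘ Inv.inv :=
    eventually_of_mem (Ioi_mem_nhds ha) fun z hz => sqrt_mul_theta hz
  have h := (hlhs.congr_of_eventuallyEq heq.symm).unique hrhs
  have hs := sqrt_pos.2 ha
  field_simp at h
  rw [sq_sqrt ha.le] at h
  field_simp
  linear_combination h

lemma F₃_eq_theta_sub {y : ℝ} (hy : y ≠ 0) :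
    F₃ y = theta (2 * y ^ 2 / π) - 2 * (2 * y ^ 2 / π) * thetaMoment (2 * y ^ 2 / π) := by
  set a := 2 * y ^ 2 / π
  have ha : 0 < a := by positivity
  have hπa : π * a = 2 * y ^ 2 := by simp only [a]; field_simp
  set f : ℤ → ℝ := fun n => (1 - 4 * n ^ 2 * y ^ 2) * exp (-(2 * n ^ 2 * y ^ 2))
  have hf : ∀ n : ℤ, exp (-π * a * n ^ 2) - 2 * a * (π * n ^ 2 * exp (-π * a * n ^ 2)) = f n := by
    intro n
    rw [show -π * a * (n : ℝ) ^ 2 = -(2 * n ^ 2 * y ^ 2) by rw [neg_mul, hπa]; ring]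
    linear_combination (-2 * (n : ℝ) ^ 2 * exp (-(2 * n ^ 2 * y ^ 2))) * hπa
  have hsum : Summable f := ((summable_exp_neg_mul_sq ha).sub
    ((summable_thetaMoment_term ha).mul_left (2 * a))).congr hf
  have heven : f.Even := fun n => by simp [f]
  rw [theta, thetaMoment, ← tsum_mul_left, ← Summable.tsum_sub (summable_exp_neg_mul_sq ha)
    ((summable_thetaMoment_term ha).mul_left _), tsum_congr hf,
    tsum_int_eq_zero_add_two_mul_tsum_succ heven hsum, F₃]
  have h0 : f 0 = 1 := by simp [f]
  have hsucc : ∀ n : ℕ, f (n + 1) =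
      -((4 * ((n : ℝ) + 1) ^ 2 * y ^ 2 - 1) * exp (-(2 * ((n : ℝ) + 1) ^ 2 * y ^ 2))) := by
    intro n
    simp only [f]
    push_cast
    ring
  rw [h0, tsum_congr hsucc, tsum_neg]
  ring

lemma mul_exp_neg_le_one (z : ℝ) : z * exp (-z) ≤ 1 := by
  calc z * exp (-z) ≤ exp z * exp (-z) := by
        gcongr; linarith [add_one_le_exp z]
    _ = 1 := by rw [← exp_add, add_neg_cancel, exp_zero]

/-- Each term is at most `exp (-u) ^ (n + 1)`, and `exp (-u) ≤ 1 / 2`. -/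
lemma tsum_mul_sq_mul_exp_le {u : ℝ} (hu : log 2 ≤ u) :
    ∑' n : ℕ, u * ((n : ℝ) + 1) ^ 2 * exp (-(2 * u * ((n : ℝ) + 1) ^ 2)) ≤ 2 * exp (-u) := by
  set r := exp (-u)
  have hu0 : 0 ≤ u := (log_nonneg one_le_two).trans hu
  have hr0 : 0 ≤ r := (exp_pos _).le
  have hr : r ≤ 1 / 2 := by
    rw [← exp_log (by norm_num : (0 : ℝ) < 1 / 2), one_div, log_inv]
    exact exp_le_exp.2 (neg_le_neg hu)
  have hterm : ∀ n : ℕ,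
      u * ((n : ℝ) + 1) ^ 2 * exp (-(2 * u * ((n : ℝ) + 1) ^ 2)) ≤ r ^ (n + 1) := by
    intro n
    set m : ℝ := n + 1
    have hm : 1 ≤ m := by simp [m]
    have hsplit : exp (-(2 * u * m ^ 2)) = exp (-(u * m ^ 2)) * exp (-(u * m ^ 2)) := by
      rw [← exp_add]; ring_nf
    have hpow : exp (-(u * m ^ 2)) ≤ r ^ (n + 1) := by
      rw [← exp_nat_mul, Nat.cast_succ]
      refine exp_le_exp.2 (show -(u * m ^ 2) ≤ m * -u from ?_)
      nlinarith [mul_le_mul_of_nonneg_left (show m ≤ m ^ 2 by nlinarith) hu0]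
    calc u * m ^ 2 * exp (-(2 * u * m ^ 2))
        = u * m ^ 2 * exp (-(u * m ^ 2)) * exp (-(u * m ^ 2)) := by rw [hsplit]; ring
      _ ≤ 1 * r ^ (n + 1) := by
        gcongr
        · exact mul_exp_neg_le_one _
      _ = r ^ (n + 1) := one_mul _
  have hgeom : HasSum (fun n : ℕ => r ^ (n + 1)) (r * (1 - r)⁻¹) := by
    simpa only [pow_succ'] using (hasSum_geometric_of_lt_one hr0 (by linarith)).mul_left r
  calc _ ≤ r * (1 - r)⁻¹ := hgeom.tsum_eq ▸ (hgeom.summable.of_nonneg_of_le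
          (fun n => by positivity) hterm).tsum_le_tsum hterm hgeom.summable
    _ ≤ r * 2 := by
        gcongr
        rw [inv_le_comm₀ (by linarith) two_pos]
        linarith
    _ = 2 * r := mul_comm _ _

lemma mul_thetaMoment_le {b : ℝ} (hb : log 2 ≤ π * b / 2) :
    b * thetaMoment b ≤ 8 * exp (-(π * b / 2)) := by
  have hb0 : 0 < b := pos_of_mul_pos_right (by linarith [log_pos one_lt_two] : 0 < π * b) pi_pos.le
  have heven : (fun n : ℤ => π * n ^ 2 * exp (-π * b * n ^ 2)).Even := fun n => by simp
  have hterm : ∀ n : ℕ, b * (π * ((n + 1 : ℤ) : ℝ) ^ 2 * exp (-π * b * ((n + 1 : ℤ) : ℝ) ^ 2)) =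
      2 * (π * b / 2 * ((n : ℝ) + 1) ^ 2 * exp (-(2 * (π * b / 2) * ((n : ℝ) + 1) ^ 2))) := by
    intro n
    rw [show -π * b * ((n + 1 : ℤ) : ℝ) ^ 2 = -(2 * (π * b / 2) * ((n : ℝ) + 1) ^ 2) by
      push_cast; ring]
    push_cast
    ring
  rw [thetaMoment, tsum_int_eq_zero_add_two_mul_tsum_succ heven (summable_thetaMoment_term hb0)]
  simp only [Int.cast_zero, zero_pow two_ne_zero, mul_zero, zero_mul, zero_add]
  rw [← mul_assoc, mul_comm b, mul_assoc, ← tsum_mul_left, tsum_congr hterm, tsum_mul_left]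
  linarith [tsum_mul_sq_mul_exp_le hb]

lemma F₃_zero : F₃ 0 = 1 := by
  have : ¬ Summable fun _ : ℕ => (-1 : ℝ) := by simp [summable_const_iff]
  simp [F₃, tsum_eq_zero_of_not_summable this]

lemma F₃_eq_thetaMoment_inv {y : ℝ} (hy : y ≠ 0) :
    F₃ y = 2 * √(2 * y ^ 2 / π) / (2 * y ^ 2 / π) ^ 2 * thetaMoment (2 * y ^ 2 / π)⁻¹ := by
  rw [F₃_eq_theta_sub hy, theta_sub_two_mul_thetaMoment (by positivity)]

lemma F₃_nonneg (y : ℝ) : 0 ≤ F₃ y := by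
  rcases eq_or_ne y 0 with rfl | hy
  · rw [F₃_zero]; exact zero_le_one
  · rw [F₃_eq_thetaMoment_inv hy]
    have := thetaMoment_nonneg (2 * y ^ 2 / π)⁻¹
    positivity

lemma sixteen_mul_le_exp {v : ℝ} (hv : 9 ≤ v) : 16 * v ≤ exp v := by
  have := pow_div_factorial_le_exp v (by linarith) 4
  norm_num [Nat.factorial] at this
  nlinarith [pow_le_pow_left₀ (by norm_num) hv 3]

lemma F₃_le_one (y : ℝ) : F₃ y ≤ 1 := by
  rcases eq_or_ne y 0 with rfl | hy
  · rw [F₃_zero]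
  rcases le_or_gt 1 (4 * y ^ 2) with hy4 | hy4
  · refine sub_le_self _ <| mul_nonneg zero_le_two <|
      tsum_nonneg fun n => mul_nonneg ?_ (exp_pos _).le
    nlinarith [show (1 : ℝ) ≤ ((n : ℝ) + 1) ^ 2 by nlinarith [n.cast_nonneg (α := ℝ)]]
  -- for small `y` the series defining `F₃` has negative terms; use the theta transform
  set b := (2 * y ^ 2 / π)⁻¹ with hb_def
  have hb : 2 * π ≤ b := by
    rw [hb_def, inv_div, le_div_iff₀ (by positivity)]
    nlinarith [pi_pos]
  have hv : 9 ≤ π * b / 2 := by nlinarith [pi_gt_three]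
  have hmom := mul_thetaMoment_le (b := b) (by linarith [log_two_lt_d9])
  have hsqrt : √b ≤ π * b / 2 := by
    refine (sqrt_le_self_iff.2 (Or.inr (by linarith [pi_gt_three]))).trans ?_
    nlinarith [pi_gt_three]
  have hexp := sixteen_mul_le_exp hv
  have hF : F₃ y = 2 * √b * (b * thetaMoment b) := by
    rw [F₃_eq_thetaMoment_inv hy, ← hb_def, ← inv_inv (2 * y ^ 2 / π), ← hb_def, sqrt_inv]
    have hb0 : 0 < b := by linarith [pi_pos]
    have := sqrt_pos.2 hb0
    field_simp
    rw [sq_sqrt hb0.le]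
  calc F₃ y ≤ 2 * √b * (8 * exp (-(π * b / 2))) := hF ▸ by gcongr
    _ = 16 * √b * exp (-(π * b / 2)) := by ring
    _ ≤ exp (π * b / 2) * exp (-(π * b / 2)) := by gcongr; linarith
    _ = 1 := by rw [← exp_add, add_neg_cancel, exp_zero]

lemma one_sub_F₃_le (y : ℝ) : 1 - F₃ y ≤ 16 / y ^ 2 := by
  rcases eq_or_ne y 0 with rfl | hy
  · simp [F₃_zero]
  have hy2 : 0 < y ^ 2 := by positivity
  rcases lt_or_ge (y ^ 2) 1 with hy1 | hy1
  · have : 1 ≤ 16 / y ^ 2 := by rw [le_div_iff₀ hy2]; linarith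
    linarith [F₃_nonneg y]
  set a := 2 * y ^ 2 / π
  have hu : π * a / 2 = y ^ 2 := by simp only [a]; field_simp
  have hmom := mul_thetaMoment_le (b := a) (by rw [hu]; linarith [log_two_lt_d9])
  rw [hu] at hmom
  have htail : 16 * exp (-y ^ 2) ≤ 16 / y ^ 2 := by
    rw [le_div_iff₀ hy2]
    nlinarith [mul_exp_neg_le_one (y ^ 2)]
  rw [F₃_eq_theta_sub hy]
  linarith [one_le_theta (show 0 < a by positivity)]

lemma one_sub_F₃_div_sqrt_le (x : ℝ) {l : ℝ} (hl : 0 ≤ l) :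
    1 - F₃ (x / √l) ≤ 16 / x ^ 2 * l := by
  have := one_sub_F₃_le (x / √l)
  rwa [div_pow, sq_sqrt hl, div_div_eq_mul_div, mul_div_right_comm] at this

lemma summable_F₃_term {y : ℝ} (hy : y ≠ 0) :
    Summable fun n : ℕ => (4 * ((n : ℝ) + 1) ^ 2 * y ^ 2 - 1) *
      exp (-(2 * ((n : ℝ) + 1) ^ 2 * y ^ 2)) := by
  have ha : 0 < 2 * y ^ 2 / π := by positivity
  have hinj : Function.Injective fun n : ℕ => (n + 1 : ℤ) := fun m n h => by simpa using h
  refine ((((summable_thetaMoment_term ha).mul_left (2 * (2 * y ^ 2 / π))).sub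
    (summable_exp_neg_mul_sq ha)).comp_injective hinj).congr fun n => ?_
  simp only [Function.comp_apply]
  push_cast
  rw [show -π * (2 * y ^ 2 / π) * ((n : ℝ) + 1) ^ 2 = -(2 * ((n : ℝ) + 1) ^ 2 * y ^ 2) by
    field_simp]
  field_simp
  ring

lemma measurable_F₃ : Measurable F₃ := by
  refine measurable_of_restrict_of_restrict_compl (measurableSet_singleton (0 : ℝ))
    Subsingleton.measurable ?_
  refine measurable_of_tendsto_metrizable (f := fun N (y : ({0}ᶜ : Set ℝ)) =>
    1 - 2 * ∑ n ∈ Finset.range N, (4 * ((n : ℝ) + 1) ^ 2 * (y : ℝ) ^ 2 - 1) *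
      exp (-(2 * ((n : ℝ) + 1) ^ 2 * (y : ℝ) ^ 2))) (fun N => by fun_prop)
    (tendsto_pi_nhds.2 fun y => ?_)
  exact tendsto_const_nhds.sub
    ((summable_F₃_term y.2).hasSum.tendsto_sum_nat.const_mul 2)

open Finset

section UnitIntervalProduct

lemma multipliable_of_mem_Icc {β : Type*} {g : β → ℝ} (hg : ∀ j, g j ∈ Icc (0 : ℝ) 1) :
    Multipliable g := by
  have hanti : Antitone fun s : Finset β => ∏ i ∈ s, g i := fun s t hst => by
    classical
    dsimp only
    rw [← prod_sdiff hst]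
    exact mul_le_of_le_one_left (prod_nonneg fun i _ => (hg i).1)
      (prod_le_one (fun i _ => (hg i).1) fun i _ => (hg i).2)
  refine ⟨_, tendsto_atTop_ciInf hanti ⟨0, ?_⟩⟩
  rintro _ ⟨s, rfl⟩
  exact prod_nonneg fun i _ => (hg i).1

variable {g : ℕ → ℝ}

lemma antitone_prod_range_of_mem_Icc (hg : ∀ j, g j ∈ Icc (0 : ℝ) 1) :
    Antitone fun N => ∏ i ∈ range N, g i :=
  antitone_nat_of_succ_le fun N => by
    rw [prod_range_succ]
    exact mul_le_of_le_one_right (prod_nonneg fun i _ => (hg i).1) (hg N).2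

lemma tendsto_prod_range_tprod_of_mem_Icc (hg : ∀ j, g j ∈ Icc (0 : ℝ) 1) :
    Tendsto (fun N => ∏ i ∈ range N, g i) atTop (𝓝 (∏' i, g i)) :=
  (multipliable_of_mem_Icc hg).hasProd.tendsto_prod_nat

lemma tprod_le_prod_range_of_mem_Icc (hg : ∀ j, g j ∈ Icc (0 : ℝ) 1) (J : ℕ) :
    ∏' i, g i ≤ ∏ i ∈ range J, g i :=
  (antitone_prod_range_of_mem_Icc hg).le_of_tendsto (tendsto_prod_range_tprod_of_mem_Icc hg) J

lemma tprod_mem_Icc (hg : ∀ j, g j ∈ Icc (0 : ℝ) 1) : ∏' i, g i ∈ Icc (0 : ℝ) 1 :=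
  ⟨ge_of_tendsto' (tendsto_prod_range_tprod_of_mem_Icc hg) fun _ => prod_nonneg fun i _ => (hg i).1,
    by simpa using tprod_le_prod_range_of_mem_Icc hg 0⟩

/-- `N ↦ ∏_{i<N} g i - R N` is monotone: `P_N - P_{N+1} = P_N (1 - g N) ≤ R N - R (N + 1)`. -/
lemma prod_range_sub_le_tprod (hg : ∀ j, g j ∈ Icc (0 : ℝ) 1) {R : ℕ → ℝ} (hR : ∀ j, 0 ≤ R j)
    (hgR : ∀ j, 1 - g j ≤ R j - R (j + 1)) (J : ℕ) :
    ∏ i ∈ range J, g i - R J ≤ ∏' i, g i := by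
  have hmono : Monotone fun N => ∏ i ∈ range N, g i - R N := monotone_nat_of_le_succ fun N => by
    have h0 : 0 ≤ ∏ i ∈ range N, g i := prod_nonneg fun i _ => (hg i).1
    have h1 : ∏ i ∈ range N, g i ≤ 1 := prod_le_one (fun i _ => (hg i).1) fun i _ => (hg i).2
    rw [prod_range_succ]
    nlinarith [hgR N, mul_nonneg (sub_nonneg.2 h1) (sub_nonneg.2 (hg N).2)]
  refine ge_of_tendsto (tendsto_prod_range_tprod_of_mem_Icc hg)
    (eventually_atTop.2 ⟨J, fun N hN => ?_⟩)
  linarith [hmono hN, hR N]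

end UnitIntervalProduct

section RandomProduct

variable {Ω : Type*} [MeasurableSpace Ω] {μ : Measure Ω} [IsFiniteMeasure μ]

lemma integrable_of_ae_mem_Icc {f : Ω → ℝ} (hf : AEStronglyMeasurable f μ)
    (h : ∀ᵐ ω ∂μ, f ω ∈ Icc (0 : ℝ) 1) : Integrable f μ :=
  Integrable.of_bound hf 1 <| h.mono fun ω hω => by
    rw [Real.norm_of_nonneg hω.1]; exact hω.2

variable {g : ℕ → Ω → ℝ}

lemma measurable_tprod_of_mem_Icc (hgm : ∀ j, Measurable (g j))
    (hg : ∀ j ω, g j ω ∈ Icc (0 : ℝ) 1) : Measurable fun ω => ∏' j, g j ω :=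
  measurable_of_tendsto_metrizable (fun _ => Finset.measurable_prod _ fun j _ => hgm j)
    (tendsto_pi_nhds.2 fun ω => tendsto_prod_range_tprod_of_mem_Icc (hg · ω))

lemma integrable_prod_range_of_mem_Icc (hgm : ∀ j, Measurable (g j))
    (hg : ∀ j ω, g j ω ∈ Icc (0 : ℝ) 1) (J : ℕ) : Integrable (fun ω => ∏ j ∈ range J, g j ω) μ :=
  integrable_of_ae_mem_Icc (Finset.measurable_prod _ fun j _ => hgm j).aestronglyMeasurable <|
    .of_forall fun ω => ⟨prod_nonneg fun j _ => (hg j ω).1,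
      prod_le_one (fun j _ => (hg j ω).1) fun j _ => (hg j ω).2⟩

lemma integrable_tprod_of_mem_Icc (hgm : ∀ j, Measurable (g j))
    (hg : ∀ j ω, g j ω ∈ Icc (0 : ℝ) 1) : Integrable (fun ω => ∏' j, g j ω) μ :=
  integrable_of_ae_mem_Icc (measurable_tprod_of_mem_Icc hgm hg).aestronglyMeasurable <|
    .of_forall fun ω => tprod_mem_Icc (hg · ω)

lemma integral_tprod_le_integral_prod_range (hgm : ∀ j, Measurable (g j))
    (hg : ∀ j ω, g j ω ∈ Icc (0 : ℝ) 1) (J : ℕ) :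
    ∫ ω, ∏' j, g j ω ∂μ ≤ ∫ ω, ∏ j ∈ range J, g j ω ∂μ :=
  integral_mono (integrable_tprod_of_mem_Icc hgm hg) (integrable_prod_range_of_mem_Icc hgm hg J)
    fun ω => tprod_le_prod_range_of_mem_Icc (hg · ω) J

lemma integral_prod_range_sub_integral_tprod_le (hgm : ∀ j, Measurable (g j))
    (hg : ∀ j ω, g j ω ∈ Icc (0 : ℝ) 1) {R : ℕ → Ω → ℝ} {J : ℕ} (hRJ : Integrable (R J) μ)
    (hR : ∀ᵐ ω ∂μ, ∀ j, 0 ≤ R j ω ∧ 1 - g j ω ≤ R j ω - R (j + 1) ω) :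
    ∫ ω, ∏ j ∈ range J, g j ω ∂μ - ∫ ω, ∏' j, g j ω ∂μ ≤ ∫ ω, R J ω ∂μ := by
  have hint := integrable_prod_range_of_mem_Icc (μ := μ) hgm hg J
  rw [sub_le_iff_le_add', ← integral_add (integrable_tprod_of_mem_Icc hgm hg) hRJ]
  refine integral_mono_ae hint ((integrable_tprod_of_mem_Icc hgm hg).add hRJ) ?_
  filter_upwards [hR] with ω hω
  linarith [prod_range_sub_le_tprod (hg · ω) (fun j => (hω j).1) (fun j => (hω j).2) J]

end RandomProduct

section StickBreaking

variable {Ω : Type*} [MeasurableSpace Ω] {μ : Measure Ω}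

lemma ae_mem_Icc_of_map_eq {X : Ω → ℝ} (hX : Measurable X)
    (h : μ.map X = volume.restrict (Icc 0 1)) : ∀ᵐ ω ∂μ, X ω ∈ Icc (0 : ℝ) 1 :=
  ae_of_ae_map hX.aemeasurable (h ▸ ae_restrict_mem measurableSet_Icc)

lemma integral_one_sub_of_map_eq {X : Ω → ℝ} (hX : Measurable X)
    (h : μ.map X = volume.restrict (Icc 0 1)) : ∫ ω, (1 - X ω) ∂μ = 1 / 2 := by
  rw [← integral_map (f := fun r => 1 - r) hX.aemeasurable (by fun_prop), h,
    integral_Icc_eq_integral_Ioc, ← intervalIntegral.integral_of_le zero_le_one]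
  simp [intervalIntegral.integral_comp_sub_left (fun x => x)]

lemma integral_prod_range_one_sub {U : ℕ → Ω → ℝ} (hUm : ∀ j, Measurable (U j))
    (hU : iIndepFun U μ) (hUu : ∀ j, μ.map (U j) = volume.restrict (Icc 0 1)) (J : ℕ) :
    ∫ ω, ∏ i ∈ range J, (1 - U i ω) ∂μ = (1 / 2) ^ J := by
  have := (hU.precomp (Fin.val_injective (n := J))).integral_fun_prod_comp (f := fun _ r => 1 - r)
    (fun i => (hUm i).aemeasurable) fun i => by fun_prop
  simp only [integral_one_sub_of_map_eq (hUm _) (hUu _), prod_const,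
    card_univ, Fintype.card_fin] at this
  rw [← this]
  exact integral_congr_ae (.of_forall fun ω => (Fin.prod_univ_eq_prod_range (1 - U · ω) J).symm)

lemma integral_prod_range_sub_integral_tprod_le_of_stickBreaking {U L g : ℕ → Ω → ℝ}
    (hUm : ∀ j, Measurable (U j)) (hU : iIndepFun U μ)
    (hUu : ∀ j, μ.map (U j) = volume.restrict (Icc 0 1))
    (hL : ∀ j ω, L j ω = U j ω * ∏ i ∈ range j, (1 - U i ω))
    (hgm : ∀ j, Measurable (g j)) (hg : ∀ j ω, g j ω ∈ Icc (0 : ℝ) 1) {c : ℝ} (hc : 0 ≤ c)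
    (hgL : ∀ j ω, 0 ≤ L j ω → 1 - g j ω ≤ c * L j ω) (J : ℕ) :
    ∫ ω, ∏ j ∈ range J, g j ω ∂μ - ∫ ω, ∏' j, g j ω ∂μ ≤ c * (1 / 2) ^ J := by
  have := hU.isProbabilityMeasure
  have hUI : ∀ᵐ ω ∂μ, ∀ i, U i ω ∈ Icc (0 : ℝ) 1 :=
    ae_all_iff.2 fun i => ae_mem_Icc_of_map_eq (hUm i) (hUu i)
  have hrest : ∀ᵐ ω ∂μ, ∀ j, ∏ i ∈ range j, (1 - U i ω) ∈ Icc (0 : ℝ) 1 :=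
    hUI.mono fun ω hω j => ⟨prod_nonneg fun i _ => sub_nonneg.2 (hω i).2,
      prod_le_one (fun i _ => sub_nonneg.2 (hω i).2) fun i _ => sub_le_self _ (hω i).1⟩
  set R : ℕ → Ω → ℝ := fun j ω => c * ∏ i ∈ range j, (1 - U i ω)
  have hR : ∀ᵐ ω ∂μ, ∀ j, 0 ≤ R j ω ∧ 1 - g j ω ≤ R j ω - R (j + 1) ω := by
    filter_upwards [hUI, hrest] with ω hω hωrest j
    refine ⟨mul_nonneg hc (hωrest j).1,
      (hgL j ω (hL j ω ▸ mul_nonneg (hω j).1 (hωrest j).1)).trans_eq ?_⟩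
    simp only [R, hL, prod_range_succ]
    ring
  have hRJ : Integrable (R J) μ :=
    (integrable_of_ae_mem_Icc (Finset.measurable_prod _ fun i _ =>
      measurable_const.sub (hUm i)).aestronglyMeasurable (hrest.mono fun _ h => h J)).const_mul _
  calc _ ≤ ∫ ω, R J ω ∂μ := integral_prod_range_sub_integral_tprod_le hgm hg hRJ hR
    _ = c * (1 / 2) ^ J := by
        simp only [R, integral_const_mul, integral_prod_range_one_sub hUm hU hUu]

end StickBreaking

lemma half_pow_lt_of_floor_le {d : ℝ} (hd : 0 < d) {J : ℕ}
    (hJ : ⌊-log d / log 2⌋ + 1 ≤ (J : ℤ)) : (1 / 2 : ℝ) ^ J < d := by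
  have hlog2 := log_pos one_lt_two
  have hJ' : -log d / log 2 < J := by
    have := Int.lt_floor_add_one (-log d / log 2)
    exact this.trans_le (by exact_mod_cast hJ)
  rw [div_lt_iff₀ hlog2] at hJ'
  rw [← log_lt_log_iff (by positivity) hd, log_pow, one_div, log_inv]
  linarith

end Excursion

open Excursion Finset

theorem stmt_0_general {Ω : Type*} [MeasurableSpace Ω] (μ : Measure Ω) [IsProbabilityMeasure μ]
    (U : ℕ → Ω → ℝ) (hUmeas : ∀ j, Measurable (U j))
    (hUindep : iIndepFun U μ)
    (hUunif : ∀ j, μ.map (U j) = volume.restrict (Set.Icc (0 : ℝ) 1))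
    (L : ℕ → Ω → ℝ)
    (hL : ∀ j ω, L j ω = U j ω * ∏ i ∈ Finset.range j, (1 - U i ω))
    (x : ℝ) (hx : 0 < x) (ε : ℝ) (hε : ε ∈ Set.Ioo (0 : ℝ) (1 / 4))
    (J : ℕ)
    (hJ : (⌊-Real.log (x ^ 2 * ε ^ 2 / 2) / Real.log 2⌋ + 1 : ℤ) ≤ (J : ℤ)) :
    0 ≤ (∫ ω, ∏ j ∈ Finset.range J, F₃ (x / Real.sqrt (L j ω)) ∂μ) -
        (∫ ω, ∏' j : ℕ, F₃ (x / Real.sqrt (L j ω)) ∂μ) ∧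
      (∫ ω, ∏ j ∈ Finset.range J, F₃ (x / Real.sqrt (L j ω)) ∂μ) -
        (∫ ω, ∏' j : ℕ, F₃ (x / Real.sqrt (L j ω)) ∂μ) < 2 * ε := by
  obtain ⟨hε0, hε1⟩ := hε
  have hLm : ∀ j, Measurable (L j) := fun j => by
    rw [funext (hL j)]
    exact (hUmeas j).mul (Finset.measurable_prod _ fun i _ => measurable_const.sub (hUmeas i))
  have hgm : ∀ j, Measurable fun ω => F₃ (x / √(L j ω)) := fun j =>
    measurable_F₃.comp (measurable_const.div (hLm j).sqrt)
  have hg : ∀ j ω, F₃ (x / √(L j ω)) ∈ Icc (0 : ℝ) 1 := fun _ _ => ⟨F₃_nonneg _, F₃_le_one _⟩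
  refine ⟨sub_nonneg.2 (integral_tprod_le_integral_prod_range hgm hg J), ?_⟩
  calc _ ≤ 16 / x ^ 2 * (1 / 2) ^ J :=
        integral_prod_range_sub_integral_tprod_le_of_stickBreaking hUmeas hUindep hUunif hL hgm hg
          (by positivity) (fun j ω hl => one_sub_F₃_div_sqrt_le x hl) J
    _ < 16 / x ^ 2 * (x ^ 2 * ε ^ 2 / 2) := by
        gcongr; exact half_pow_lt_of_floor_le (by positivity) hJ
    _ = 8 * ε ^ 2 := by field_simp; ring
    _ < 2 * ε := by nlinarith

/-- Let `(U_j)_{j≥1}` be i.i.d. uniform on `[0,1]` and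
`L_j = U_j ∏_{i<j}(1 − U_i)` the uniform stick-breaking process
(indexed here from `0`, so `L j` is the paper's `L_{j+1}`).
Set `F(x) = E[∏_{j=1}^∞ F₃(x/√L_j)]` and `F_J(x) = E[∏_{j=1}^J F₃(x/√L_j)]`.
Let `x > 0` and `ε ∈ (0, 1/4)`.  If `J` is a positive integer with
`J ≥ J₀ := ⌊−ln(x²ε²/2)/ln 2⌋ + 1`, then `0 ≤ F_J(x) − F(x) < 2ε`. -/
theorem stmt_0 {Ω : Type*} [MeasurableSpace Ω] (μ : Measure Ω) [IsProbabilityMeasure μ]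
    (U : ℕ → Ω → ℝ) (hUmeas : ∀ j, Measurable (U j))
    (hUindep : iIndepFun U μ)
    (hUunif : ∀ j, μ.map (U j) = volume.restrict (Set.Icc (0 : ℝ) 1))
    (L : ℕ → Ω → ℝ)
    (hL : ∀ j ω, L j ω = U j ω * ∏ i ∈ Finset.range j, (1 - U i ω))
    (x : ℝ) (hx : 0 < x) (ε : ℝ) (hε : ε ∈ Set.Ioo (0 : ℝ) (1 / 4))
    (J : ℕ) (hJpos : 0 < J)
    (hJ : (⌊-Real.log (x ^ 2 * ε ^ 2 / 2) / Real.log 2⌋ + 1 : ℤ) ≤ (J : ℤ)) :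
    0 ≤ (∫ ω, ∏ j ∈ Finset.range J, F₃ (x / Real.sqrt (L j ω)) ∂μ) -
        (∫ ω, ∏' j : ℕ, F₃ (x / Real.sqrt (L j ω)) ∂μ) ∧
      (∫ ω, ∏ j ∈ Finset.range J, F₃ (x / Real.sqrt (L j ω)) ∂μ) -
        (∫ ω, ∏' j : ℕ, F₃ (x / Real.sqrt (L j ω)) ∂μ) < 2 * ε :=
  stmt_0_general μ U hUmeas hUindep hUunif L hL x hx ε hε J hJ
end

section
/- For every real x ≥ √2, F₃(x) ≥ exp(−1/x²). -/
open Real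

lemma exp_neg_inv_le_one_sub_inv_add_one {t : ℝ} (ht : 0 < t) :
    exp (-(1 / t)) ≤ 1 - 1 / (t + 1) := by
  rw [exp_neg]
  calc (exp (1 / t))⁻¹ ≤ (1 / t + 1)⁻¹ := inv_anti₀ (by positivity) (add_one_le_exp _)
    _ = 1 - 1 / (t + 1) := by field_simp; ring

lemma le_two_mul_exp_sub_two {t : ℝ} (ht : 2 ≤ t) : t ≤ 2 * exp (t - 2) := by
  linarith [add_one_le_exp (t - 2)]

lemma sq_mul_exp_neg_le {t m : ℝ} (ht : 2 ≤ t) (hm : 1 ≤ m) :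
    t ^ 2 * exp (-(2 * m ^ 2 * t)) ≤ 4 * exp (-(4 * m ^ 2)) := by
  have hsq : t ^ 2 ≤ 4 * exp (2 * (t - 2)) := by
    calc t ^ 2 ≤ (2 * exp (t - 2)) ^ 2 := by gcongr; exact le_two_mul_exp_sub_two ht
      _ = 4 * exp (2 * (t - 2)) := by rw [mul_pow, ← exp_nat_mul]; norm_num
  calc t ^ 2 * exp (-(2 * m ^ 2 * t))
      ≤ 4 * exp (2 * m ^ 2 * (t - 2)) * exp (-(2 * m ^ 2 * t)) := by
        gcongr
        refine hsq.trans (by gcongr; nlinarith)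
    _ = 4 * exp (-(4 * m ^ 2)) := by rw [mul_assoc, ← exp_add]; ring_nf

lemma sq_mul_exp_neg_four_mul_sq_le (n : ℕ) :
    ((n : ℝ) + 1) ^ 2 * exp (-(4 * ((n : ℝ) + 1) ^ 2)) ≤ exp (-4) * exp (-6) ^ n := by
  set m : ℝ := n + 1
  calc m ^ 2 * exp (-(4 * m ^ 2)) ≤ exp (m ^ 2 - 1) * exp (-(4 * m ^ 2)) := by
        gcongr; linarith [add_one_le_exp (m ^ 2 - 1)]
    _ ≤ exp (-4 + n * (-6)) := by
        rw [← exp_add]; exact exp_le_exp.mpr (by nlinarith [sq_nonneg (n : ℝ)])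
    _ = exp (-4) * exp (-6) ^ n := by rw [exp_add, exp_nat_mul]

lemma exp_neg_four_div_one_sub_exp_neg_six_le : exp (-4) / (1 - exp (-6)) ≤ 1 / 48 := by
  have he : (2.7 : ℝ) ^ 4 ≤ exp 4 := by
    rw [show (4 : ℝ) = (4 : ℕ) * 1 by norm_num, exp_nat_mul]
    gcongr; linarith [exp_one_gt_d9]
  have h4 : 49 * exp (-4) ≤ 1 := by
    rw [exp_neg, ← div_eq_mul_inv, div_le_one (exp_pos 4)]; norm_num at he; linarith
  have h6 : exp (-6) ≤ exp (-4) := exp_le_exp.mpr (by norm_num)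
  rw [div_le_div_iff₀ (by linarith [exp_pos (-4)]) (by norm_num)]
  linarith

noncomputable def excursionTerm (t : ℝ) (n : ℕ) : ℝ :=
  (4 * ((n : ℝ) + 1) ^ 2 * t - 1) * exp (-(2 * ((n : ℝ) + 1) ^ 2 * t))

lemma F₃_eq_one_sub_tsum_excursionTerm (x : ℝ) :
    F₃ x = 1 - 2 * ∑' n, excursionTerm (x ^ 2) n := rfl

lemma excursionTerm_nonneg {t : ℝ} (ht : 1 / 4 ≤ t) (n : ℕ) : 0 ≤ excursionTerm t n := by
  have : (1 : ℝ) ≤ ((n : ℝ) + 1) ^ 2 := one_le_pow₀ (by linarith [n.cast_nonneg (α := ℝ)])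
  exact mul_nonneg (by nlinarith) (exp_nonneg _)

lemma excursionTerm_le {t : ℝ} (ht : 2 ≤ t) (n : ℕ) :
    excursionTerm t n ≤ 16 / t * (exp (-4) * exp (-6) ^ n) := by
  have ht0 : 0 < t := by linarith
  set m : ℝ := n + 1
  have hm : 1 ≤ m := by linarith [n.cast_nonneg (α := ℝ)]
  calc (4 * m ^ 2 * t - 1) * exp (-(2 * m ^ 2 * t))
      ≤ 4 * m ^ 2 * t * exp (-(2 * m ^ 2 * t)) := by gcongr; linarith
    _ = 4 * m ^ 2 / t * (t ^ 2 * exp (-(2 * m ^ 2 * t))) := by field_simp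
    _ ≤ 4 * m ^ 2 / t * (4 * exp (-(4 * m ^ 2))) := by
        gcongr 4 * m ^ 2 / t * ?_; exact sq_mul_exp_neg_le ht hm
    _ = 16 / t * (m ^ 2 * exp (-(4 * m ^ 2))) := by ring
    _ ≤ 16 / t * (exp (-4) * exp (-6) ^ n) := by
        gcongr 16 / t * ?_; exact sq_mul_exp_neg_four_mul_sq_le n

lemma tsum_excursionTerm_le {t : ℝ} (ht : 2 ≤ t) : ∑' n, excursionTerm t n ≤ 1 / (3 * t) := by
  have hr : exp (-6) < 1 := exp_lt_one_iff.mpr (by norm_num)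
  have hgeom := ((hasSum_geometric_of_lt_one (exp_nonneg _) hr).mul_left (exp (-4))).mul_left
    (16 / t)
  have hsummable : Summable (excursionTerm t) :=
    .of_nonneg_of_le (excursionTerm_nonneg (by linarith)) (excursionTerm_le ht) hgeom.summable
  calc _ ≤ 16 / t * (exp (-4) * (1 - exp (-6))⁻¹) :=
        hasSum_le (excursionTerm_le ht) hsummable.hasSum hgeom
    _ ≤ 16 / t * (1 / 48) := by
        have : 0 < t := by linarith
        gcongr; exact exp_neg_four_div_one_sub_exp_neg_six_le
    _ = 1 / (3 * t) := by field_simp; norm_num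

/-- For every real `x ≥ √2`, `F₃(x) ≥ exp(−1/x²)`. -/
theorem stmt_4 (x : ℝ) (hx : Real.sqrt 2 ≤ x) :
    Real.exp (-(1 / x ^ 2)) ≤ F₃ x := by
  have ht : 2 ≤ x ^ 2 := (sqrt_le_iff.mp hx).2
  have hsum := tsum_excursionTerm_le ht
  have hcmp : 2 * (1 / (3 * x ^ 2)) ≤ 1 / (x ^ 2 + 1) := by
    rw [mul_one_div, div_le_div_iff₀ (by positivity) (by positivity)]; linarith
  calc exp (-(1 / x ^ 2)) ≤ 1 - 1 / (x ^ 2 + 1) :=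
        exp_neg_inv_le_one_sub_inv_add_one (by positivity)
    _ ≤ F₃ x := by rw [F₃_eq_one_sub_tsum_excursionTerm]; linarith
end

section
/- For every real x > 0, 2∑_{k=1}^∞ (4k²x² − 1)·exp(−2k²x²) ≤ 2·exp(−x²)/(1 − exp(−x²)). Equivalently, 1 − F₃(x) ≤ 2e^{−x²}/(1 − e^{−x²}). -/
open Real

lemma four_mul_sub_two_le_exp (s : ℝ) : 4 * s - 2 ≤ exp s := by
  rcases lt_or_ge s 0 with hs | hs
  · linarith [exp_pos s]
  · have h := sum_le_exp_of_nonneg hs 4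
    norm_num [Finset.sum_range_succ, Nat.factorial] at h
    -- `s³/6 + s²/2 - 3s + 3 > 0`, with its minimum near `s = 1.65`
    nlinarith [mul_nonneg hs (sq_nonneg (s - 1.65)), sq_nonneg (s - 1.65)]

lemma abs_mul_exp_le_exp_add_exp {t m : ℝ} (ht : 0 ≤ t) (hm : 1 ≤ m) :
    |(4 * m ^ 2 * t - 1) * exp (-(2 * m ^ 2 * t))| ≤
      exp (-((2 * m - 1) * t)) + exp (-(2 * m * t)) := by
  have hmm : 0 ≤ m * (m - 1) := mul_nonneg (by linarith) (by linarith)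
  have hodd : exp (m ^ 2 * t) * exp (-(2 * m ^ 2 * t)) ≤ exp (-((2 * m - 1) * t)) := by
    rw [← exp_add, exp_le_exp]
    nlinarith [mul_nonneg (sq_nonneg (m - 1)) ht]
  have heven : exp (-(2 * m ^ 2 * t)) ≤ exp (-(2 * m * t)) := by
    rw [exp_le_exp]
    nlinarith [mul_nonneg hmm ht]
  have hpos := exp_pos (-(2 * m ^ 2 * t))
  rw [abs_le]
  constructor
  · nlinarith [exp_pos (-((2 * m - 1) * t)), mul_nonneg (sq_nonneg m) ht]
  · calc (4 * m ^ 2 * t - 1) * exp (-(2 * m ^ 2 * t))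
        ≤ (exp (m ^ 2 * t) + 1) * exp (-(2 * m ^ 2 * t)) := by
          gcongr; linarith [four_mul_sub_two_le_exp (m ^ 2 * t)]
      _ = exp (m ^ 2 * t) * exp (-(2 * m ^ 2 * t)) + exp (-(2 * m ^ 2 * t)) := by ring
      _ ≤ _ := add_le_add hodd heven

lemma hasSum_pow_odd_add_pow_even {r : ℝ} (hr : |r| < 1) :
    HasSum (fun k : ℕ => r ^ (2 * k + 1) + r ^ (2 * k + 2)) (r / (1 - r)) := by
  have hr2 : |r ^ 2| < 1 := by
    rw [abs_pow, sq_lt_one_iff₀ (abs_nonneg r)]; exact hr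
  have h1r : 1 - r ≠ 0 := by linarith [le_abs_self r]
  have h1r' : 1 + r ≠ 0 := by linarith [neg_abs_le r]
  have hsum : (r + r ^ 2) * (1 - r ^ 2)⁻¹ = r / (1 - r) := by
    rw [show 1 - r ^ 2 = (1 - r) * (1 + r) by ring]
    field_simp
  have hgeom := (hasSum_geometric_of_abs_lt_one hr2).mul_left (r + r ^ 2)
  rw [hsum] at hgeom
  exact hgeom.congr_fun fun k => by ring

lemma tsum_excursion_le {t : ℝ} (ht : 0 < t) :
    ∑' k : ℕ, (4 * ((k : ℝ) + 1) ^ 2 * t - 1) * exp (-(2 * ((k : ℝ) + 1) ^ 2 * t)) ≤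
      exp (-t) / (1 - exp (-t)) := by
  have hr : |exp (-t)| < 1 := by
    rw [abs_of_pos (exp_pos _), exp_lt_one_iff]; linarith
  have hbound : ∀ k : ℕ,
      ‖(4 * ((k : ℝ) + 1) ^ 2 * t - 1) * exp (-(2 * ((k : ℝ) + 1) ^ 2 * t))‖ ≤
        exp (-t) ^ (2 * k + 1) + exp (-t) ^ (2 * k + 2) := by
    intro k
    have h := abs_mul_exp_le_exp_add_exp (m := (k : ℝ) + 1) ht.le (by simp)
    simp only [← exp_nat_mul, Real.norm_eq_abs]
    convert h using 3 <;> push_cast <;> ring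
  have hg := hasSum_pow_odd_add_pow_even hr
  have hf := (Summable.of_norm_bounded hg.summable hbound).hasSum
  exact hasSum_le (fun k => (le_abs_self _).trans (hbound k)) hf hg

/-- For every real `x > 0`,
`2∑_{k=1}^∞ (4k²x² − 1)·exp(−2k²x²) ≤ 2·exp(−x²)/(1 − exp(−x²))`;
equivalently `1 − F₃(x) ≤ 2e^{−x²}/(1 − e^{−x²})`. -/
theorem stmt_7 (x : ℝ) (hx : 0 < x) :
    2 * ∑' k : ℕ, (4 * ((k : ℝ) + 1) ^ 2 * x ^ 2 - 1) *
        Real.exp (-(2 * ((k : ℝ) + 1) ^ 2 * x ^ 2)) ≤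
      2 * Real.exp (-x ^ 2) / (1 - Real.exp (-x ^ 2)) ∧
    1 - F₃ x ≤ 2 * Real.exp (-x ^ 2) / (1 - Real.exp (-x ^ 2)) := by
  have h : 2 * ∑' k : ℕ, (4 * ((k : ℝ) + 1) ^ 2 * x ^ 2 - 1) *
      exp (-(2 * ((k : ℝ) + 1) ^ 2 * x ^ 2)) ≤ 2 * exp (-x ^ 2) / (1 - exp (-x ^ 2)) := by
    rw [mul_div_assoc]
    gcongr
    exact tsum_excursion_le (by positivity)
  refine ⟨h, ?_⟩
  unfold F₃
  linarith
end

section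
/- The function k(t) = (exp(t) − 1)(1 − exp(−1/t)) is increasing on [2, ∞) and satisfies k(t) ≥ 2 for all t ≥ 2; equivalently, 2·exp(−t) ≤ (1 − exp(−t))(1 − exp(−1/t)) for all t ≥ 2. -/
/-!
Writing `E = exp (-1/t)`, the derivative of `k t = (exp t - 1)(1 - E)` is
`exp t (1 - E) - (exp t - 1) E / t²`, which is nonnegative for `t ≥ 1` because
`1 - E ≥ E / t ≥ E / t²` (this is `exp (1/t) ≥ 1 + 1/t`). Hence `k t ≥ k 2 > 2` for `t ≥ 2`,
and multiplying by `exp (-t)` gives the last form.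
-/

open Real

noncomputable def k (t : ℝ) : ℝ := (exp t - 1) * (1 - exp (-(1 / t)))

lemma mul_exp_neg_le_one_sub_exp_neg (y : ℝ) : y * exp (-y) ≤ 1 - exp (-y) := by
  have h : (y + 1) * exp (-y) ≤ exp y * exp (-y) :=
    mul_le_mul_of_nonneg_right (add_one_le_exp y) (exp_pos _).le
  rw [← exp_add, add_neg_cancel, exp_zero] at h
  linarith

lemma hasDerivAt_k {x : ℝ} (hx : x ≠ 0) :
    HasDerivAt k
      (exp x * (1 - exp (-(1 / x))) - (exp x - 1) * (exp (-(1 / x)) / x ^ 2)) x := by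
  have hinv : HasDerivAt (fun t : ℝ => -(1 / t)) (1 / x ^ 2) x := by
    simpa [one_div] using (hasDerivAt_inv hx).fun_neg
  have hE : HasDerivAt (fun t : ℝ => 1 - exp (-(1 / t))) (-(exp (-(1 / x)) / x ^ 2)) x := by
    simpa [div_eq_mul_inv] using hinv.exp.const_sub 1
  exact (((hasDerivAt_exp x).sub_const 1).fun_mul hE).congr_deriv (by ring)

lemma deriv_k_nonneg {x : ℝ} (hx : 1 ≤ x) :
    0 ≤ exp x * (1 - exp (-(1 / x))) - (exp x - 1) * (exp (-(1 / x)) / x ^ 2) := by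
  set E := exp (-(1 / x))
  have hx0 : 0 < x := by linarith
  have hE : E / x ^ 2 ≤ 1 - E :=
    calc E / x ^ 2 = (1 / x) * E / x := by field_simp
      _ ≤ (1 / x) * E := div_le_self (by positivity) hx
      _ ≤ 1 - E := mul_exp_neg_le_one_sub_exp_neg (1 / x)
  rw [sub_nonneg]
  calc (exp x - 1) * (E / x ^ 2) ≤ exp x * (E / x ^ 2) := by
        gcongr
        linarith
    _ ≤ exp x * (1 - E) := by gcongr

lemma monotoneOn_k : MonotoneOn k (Set.Ici 1) := by
  have hderiv : ∀ x ∈ Set.Ici (1 : ℝ), HasDerivAt k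
      (exp x * (1 - exp (-(1 / x))) - (exp x - 1) * (exp (-(1 / x)) / x ^ 2)) x :=
    fun x hx => hasDerivAt_k (by simp only [Set.mem_Ici] at hx; positivity)
  refine monotoneOn_of_hasDerivWithinAt_nonneg (convex_Ici 1)
    (fun x hx => (hderiv x hx).continuousAt.continuousWithinAt)
    (fun x hx => (hderiv x (interior_subset hx)).hasDerivWithinAt) fun x hx => ?_
  exact deriv_k_nonneg (interior_subset hx)

lemma two_lt_k_two : 2 < k 2 := by
  have he : (2.7 : ℝ) < exp 1 := lt_trans (by norm_num) exp_one_gt_d9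
  have he2 : exp 2 = exp 1 * exp 1 := by rw [← exp_add]; norm_num
  have hE : 1 / 3 ≤ 1 - exp (-(1 / 2)) := by
    have := mul_exp_neg_le_one_sub_exp_neg (1 / 2)
    linarith
  calc (2 : ℝ) < (exp 2 - 1) * (1 / 3) := by nlinarith
    _ ≤ k 2 := mul_le_mul_of_nonneg_left hE (by nlinarith)

lemma exp_neg_mul_k (t : ℝ) :
    exp (-t) * k t = (1 - exp (-t)) * (1 - exp (-(1 / t))) := by
  have h : exp (-t) * (exp t - 1) = 1 - exp (-t) := by
    rw [mul_sub, ← exp_add, neg_add_cancel, exp_zero, mul_one]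
  rw [k, ← mul_assoc, h]

/-- The function `k(t) = (exp t − 1)(1 − exp(−1/t))` is increasing on `[2, ∞)` and
satisfies `k(t) ≥ 2` for all `t ≥ 2`; equivalently,
`2·exp(−t) ≤ (1 − exp(−t))(1 − exp(−1/t))` for all `t ≥ 2`. -/
theorem stmt_8 :
    MonotoneOn (fun t : ℝ => (Real.exp t - 1) * (1 - Real.exp (-(1 / t))))
      (Set.Ici (2 : ℝ)) ∧
    (∀ t : ℝ, 2 ≤ t → 2 ≤ (Real.exp t - 1) * (1 - Real.exp (-(1 / t)))) ∧
    ∀ t : ℝ, 2 ≤ t →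
      2 * Real.exp (-t) ≤ (1 - Real.exp (-t)) * (1 - Real.exp (-(1 / t))) := by
  have hmono : MonotoneOn k (Set.Ici 2) :=
    monotoneOn_k.mono (Set.Ici_subset_Ici.mpr one_le_two)
  have hk : ∀ t : ℝ, 2 ≤ t → 2 ≤ k t := fun t ht =>
    two_lt_k_two.le.trans (hmono Set.self_mem_Ici ht ht)
  refine ⟨hmono, hk, fun t ht => ?_⟩
  rw [← exp_neg_mul_k, mul_comm]
  exact mul_le_mul_of_nonneg_left (hk t ht) (exp_pos _).le
end

section
/- For every real x > 0, x·K₁(x) − K₀(x) ≤ √(π/2)·√x·exp(−x). -/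
/-!
Integrating by parts against `d/dt (t e^{-x cosh t}) = (1 - x t sinh t) e^{-x cosh t}` gives
`K₀(x) = x ∫₀^∞ t sinh t e^{-x cosh t} dt`, hence
`x K₁(x) - K₀(x) = x ∫₀^∞ (cosh t - t sinh t) e^{-x cosh t} dt`.
Since `cosh` is convex, its tangent line at `t` gives `cosh t - t sinh t ≤ cosh 0 = 1`, and
`cosh t ≥ 1 + t²/2` bounds the integrand by the Gaussian `x e^{-x} e^{-x t²/2}`, whose integral
over `(0, ∞)` is `√(π/2) √x e^{-x}`. All integrals converge because
`coshⁿ t e^{-x cosh t} ≤ n! (2/x)ⁿ e^{-(x/2) cosh t}`.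
-/

/-- Modified Bessel function of the second kind of order 0:
`K₀(x) = ∫₀^∞ exp(−x cosh t) dt`. -/
noncomputable def besselK0 (x : ℝ) : ℝ :=
  ∫ t in Set.Ioi (0 : ℝ), Real.exp (-(x * Real.cosh t))

/-- Modified Bessel function of the second kind of order 1:
`K₁(x) = ∫₀^∞ exp(−x cosh t)·cosh t dt`. -/
noncomputable def besselK1 (x : ℝ) : ℝ :=
  ∫ t in Set.Ioi (0 : ℝ), Real.exp (-(x * Real.cosh t)) * Real.cosh t

open Real Set MeasureTheory Filter Topology
open scoped Nat

namespace Real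

lemma abs_le_abs_sinh (t : ℝ) : |t| ≤ |sinh t| := by
  rw [abs_sinh]
  exact self_le_sinh_iff.2 (abs_nonneg t)

lemma abs_sinh_le_cosh (t : ℝ) : |sinh t| ≤ cosh t := by
  rw [abs_sinh, ← cosh_abs]
  exact (sinh_lt_cosh _).le

lemma one_add_sq_div_two_le_cosh (t : ℝ) : 1 + t ^ 2 / 2 ≤ cosh t := by
  have hcosh := cosh_two_mul (t / 2)
  rw [mul_div_cancel₀ t two_ne_zero, cosh_sq] at hcosh
  have hsq : (t / 2) ^ 2 ≤ sinh (t / 2) ^ 2 := sq_le_sq.2 (abs_le_abs_sinh _)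
  rw [hcosh]
  linarith

lemma cosh_sub_mul_sinh_le_one (t : ℝ) : cosh t - t * sinh t ≤ 1 := by
  have hpos : exp t * (1 - t) ≤ 1 := by
    calc exp t * (1 - t) ≤ exp t * exp (-t) :=
          mul_le_mul_of_nonneg_left (by linarith [add_one_le_exp (-t)]) (exp_pos t).le
      _ = 1 := by rw [← exp_add, add_neg_cancel, exp_zero]
  have hneg : exp (-t) * (1 + t) ≤ 1 := by
    calc exp (-t) * (1 + t) ≤ exp (-t) * exp t :=
          mul_le_mul_of_nonneg_left (by linarith [add_one_le_exp t]) (exp_pos _).le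
      _ = 1 := by rw [← exp_add, neg_add_cancel, exp_zero]
  rw [cosh_eq, sinh_eq]
  linarith

lemma self_le_cosh (t : ℝ) : t ≤ cosh t := by
  nlinarith [one_add_sq_div_two_le_cosh t]

lemma abs_mul_sinh_le_cosh_sq (t : ℝ) : |t * sinh t| ≤ cosh t ^ 2 := by
  rw [abs_mul, sq]
  exact mul_le_mul ((abs_le_abs_sinh t).trans (abs_sinh_le_cosh t)) (abs_sinh_le_cosh t)
    (abs_nonneg _) (cosh_pos t).le

end Real

section
variable {x : ℝ}

lemma exp_neg_mul_cosh_le (hx : 0 ≤ x) (t : ℝ) :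
    exp (-(x * cosh t)) ≤ exp (-x) * exp (-(x / 2) * t ^ 2) := by
  rw [← exp_add, exp_le_exp]
  nlinarith [one_add_sq_div_two_le_cosh t]

lemma exp_neg_mul_cosh_mul_cosh_pow_le (hx : 0 < x) (n : ℕ) (t : ℝ) :
    exp (-(x * cosh t)) * cosh t ^ n ≤ n ! * (2 / x) ^ n * exp (-(x / 2 * cosh t)) := by
  set u := x / 2 * cosh t
  have hpow : u ^ n ≤ n ! * exp u :=
    (div_le_iff₀' (by positivity)).1 (pow_div_factorial_le_exp u (by positivity) n)
  calc exp (-(x * cosh t)) * cosh t ^ n = (2 / x) ^ n * exp (-u) * (u ^ n * exp (-u)) := by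
        have hexp : exp (-(x * cosh t)) = exp (-u) * exp (-u) := by
          rw [← exp_add]; congr 1; simp only [u]; ring
        have hcosh : cosh t ^ n = (2 / x) ^ n * u ^ n := by
          rw [← mul_pow]; congr 1; simp only [u]; field_simp
        rw [hexp, hcosh]
        ring
    _ ≤ (2 / x) ^ n * exp (-u) * (n ! * exp u * exp (-u)) := by gcongr
    _ = n ! * (2 / x) ^ n * exp (-u) := by
        rw [mul_assoc _ (exp u), ← exp_add, add_neg_cancel, exp_zero]
        ring

lemma integrable_exp_neg_mul_cosh (hx : 0 < x) : Integrable fun t => exp (-(x * cosh t)) := by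
  refine ((integrable_exp_neg_mul_sq (half_pos hx)).const_mul (exp (-x))).mono'
    (by fun_prop) (ae_of_all _ fun t => ?_)
  rw [norm_of_nonneg (exp_pos _).le]
  exact exp_neg_mul_cosh_le hx.le t

lemma integrable_exp_neg_mul_cosh_mul_cosh_pow (hx : 0 < x) (n : ℕ) :
    Integrable fun t => exp (-(x * cosh t)) * cosh t ^ n := by
  refine ((integrable_exp_neg_mul_cosh (half_pos hx)).const_mul (n ! * (2 / x) ^ n)).mono'
    (by fun_prop) (ae_of_all _ fun t => ?_)
  rw [norm_of_nonneg (by positivity)]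
  exact exp_neg_mul_cosh_mul_cosh_pow_le hx n t

lemma tendsto_exp_neg_mul_cosh_mul_cosh (hx : 0 < x) :
    Tendsto (fun t => exp (-(x * cosh t)) * cosh t) atTop (𝓝 0) := by
  have hcosh : Tendsto cosh atTop atTop :=
    tendsto_atTop_mono self_le_cosh tendsto_id
  have := ((tendsto_pow_mul_exp_neg_atTop_nhds_zero 1).comp
    (hcosh.const_mul_atTop hx)).const_mul x⁻¹
  rw [mul_zero] at this
  refine this.congr fun t => ?_
  simp only [Function.comp_apply, pow_one]
  field_simp

lemma integrable_mul_sinh_mul_exp_neg_mul_cosh (hx : 0 < x) :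
    Integrable fun t => t * sinh t * exp (-(x * cosh t)) := by
  refine (integrable_exp_neg_mul_cosh_mul_cosh_pow hx 2).mono' (by fun_prop)
    (ae_of_all _ fun t => ?_)
  rw [norm_mul, norm_of_nonneg (exp_pos _).le, mul_comm]
  exact mul_le_mul_of_nonneg_left (abs_mul_sinh_le_cosh_sq t) (exp_pos _).le

lemma tendsto_mul_exp_neg_mul_cosh (hx : 0 < x) :
    Tendsto (fun t => t * exp (-(x * cosh t))) atTop (𝓝 0) := by
  refine squeeze_zero' (eventually_ge_atTop 0 |>.mono fun t ht => by positivity)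
    (Eventually.of_forall fun t => ?_) (tendsto_exp_neg_mul_cosh_mul_cosh hx)
  rw [mul_comm]
  exact mul_le_mul_of_nonneg_left (self_le_cosh t) (exp_pos _).le

theorem besselK0_eq_integral_mul_sinh_mul_exp_neg_mul_cosh (hx : 0 < x) :
    besselK0 x = ∫ t in Ioi 0, x * (t * sinh t * exp (-(x * cosh t))) := by
  have hderiv : ∀ t ∈ Ici (0 : ℝ), HasDerivAt (fun t => -(t * exp (-(x * cosh t))))
      (x * (t * sinh t * exp (-(x * cosh t))) - exp (-(x * cosh t))) t := by
    intro t _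
    have hexp : HasDerivAt (fun t => exp (-(x * cosh t)))
        (exp (-(x * cosh t)) * -(x * sinh t)) t :=
      ((hasDerivAt_cosh t).const_mul x).neg.exp
    have hprod : HasDerivAt (fun t => -(t * exp (-(x * cosh t))))
        (-(1 * exp (-(x * cosh t)) + t * (exp (-(x * cosh t)) * -(x * sinh t)))) t :=
      ((hasDerivAt_id' t).mul hexp).neg
    exact hprod.congr_deriv (by ring)
  have hint : IntegrableOn (fun t => x * (t * sinh t * exp (-(x * cosh t)))
      - exp (-(x * cosh t))) (Ioi 0) :=
    (((integrable_mul_sinh_mul_exp_neg_mul_cosh hx).const_mul x).sub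
      (integrable_exp_neg_mul_cosh hx)).integrableOn
  have hftc := integral_Ioi_of_hasDerivAt_of_tendsto' hderiv hint
    (tendsto_mul_exp_neg_mul_cosh hx).neg
  rw [integral_sub (((integrable_mul_sinh_mul_exp_neg_mul_cosh hx).const_mul x).integrableOn)
    (integrable_exp_neg_mul_cosh hx).integrableOn] at hftc
  simp only [neg_zero, zero_mul, sub_zero] at hftc
  rw [besselK0]
  linarith

lemma mul_cosh_sub_mul_sinh_mul_exp_neg_mul_cosh_le (hx : 0 ≤ x) (t : ℝ) :
    x * (cosh t - t * sinh t) * exp (-(x * cosh t)) ≤ x * exp (-x) * exp (-(x / 2) * t ^ 2) := by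
  calc x * (cosh t - t * sinh t) * exp (-(x * cosh t)) ≤ x * 1 * exp (-(x * cosh t)) := by
        gcongr
        exact cosh_sub_mul_sinh_le_one t
    _ ≤ x * exp (-x) * exp (-(x / 2) * t ^ 2) := by
        rw [mul_one, mul_assoc]
        exact mul_le_mul_of_nonneg_left (exp_neg_mul_cosh_le hx t) hx

lemma mul_integral_gaussian_Ioi_half (hx : 0 < x) :
    x * ∫ t in Ioi 0, exp (-(x / 2) * t ^ 2) = √(π / 2) * √x := by
  rw [integral_gaussian_Ioi, show π / (x / 2) = π / 2 * (2 / √x) ^ 2 by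
        rw [div_pow, sq_sqrt hx.le]; field_simp,
    sqrt_mul (by positivity), sqrt_sq (by positivity)]
  field_simp
  rw [sq_sqrt hx.le]

end

/-- For every real `x > 0`, `x·K₁(x) − K₀(x) ≤ √(π/2)·√x·exp(−x)`. -/
theorem stmt_10 (x : ℝ) (hx : 0 < x) :
    x * besselK1 x - besselK0 x ≤
      Real.sqrt (Real.pi / 2) * Real.sqrt x * Real.exp (-x) := by
  have hK1 : Integrable fun t => x * (exp (-(x * cosh t)) * cosh t) := by
    simpa only [pow_one] using (integrable_exp_neg_mul_cosh_mul_cosh_pow hx 1).const_mul x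
  have hK0 := (integrable_mul_sinh_mul_exp_neg_mul_cosh hx).const_mul x
  calc x * besselK1 x - besselK0 x
      = ∫ t in Ioi 0, (x * (exp (-(x * cosh t)) * cosh t)
          - x * (t * sinh t * exp (-(x * cosh t)))) := by
        rw [besselK1, besselK0_eq_integral_mul_sinh_mul_exp_neg_mul_cosh hx,
          ← integral_const_mul, integral_sub hK1.integrableOn hK0.integrableOn]
    _ ≤ ∫ t in Ioi 0, exp (-x) * (x * exp (-(x / 2) * t ^ 2)) := by
        refine setIntegral_mono_on (hK1.sub hK0).integrableOn
          (((integrable_exp_neg_mul_sq (half_pos hx)).const_mul x).const_mul _).integrableOn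
          measurableSet_Ioi fun t _ => ?_
        linear_combination mul_cosh_sub_mul_sinh_mul_exp_neg_mul_cosh_le hx.le t
    _ = √(π / 2) * √x * exp (-x) := by
        rw [integral_const_mul, integral_const_mul, mul_integral_gaussian_Ioi_half hx]
        ring
end

section
/- For every positive integer K and every integer k with 1 ≤ k ≤ 2K, the Gaver–Stehfest coefficient satisfies |ξ_k| ≤ (1/K!)·(k/2)·K^{K+2}·(2e²)^K. -/
/-!
Dropping the sign, `|ξ_k| · K!` is a sum of positive terms indexed by `j ≤ K`. Bounding
`j^{K+1} ≤ K^{K+1}`, `C(2j,j) ≤ 4^j`, `C(j,k-j) ≤ 2^j` and extending the sum to all `0 ≤ j ≤ K`,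
the binomial theorem gives `K^{K+1} (1 + 8)^K`, and `9 ≤ 2e²`. The factor `k/2` absorbs
the remaining `K` once `k ≥ 2`; for `k = 1` the sum has the single term `2K`.
-/

noncomputable def gsXi (K k : ℕ) : ℝ :=
  ((-1 : ℝ) ^ (k + K) / (Nat.factorial K : ℝ)) *
    ∑ j ∈ Finset.Icc ((k + 1) / 2) (min k K),
      (j : ℝ) ^ (K + 1) * (Nat.choose K j : ℝ) * (Nat.choose (2 * j) j : ℝ) *
        (Nat.choose j (k - j) : ℝ)

open Finset Real

noncomputable def gsSum (K k : ℕ) : ℝ :=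
  ∑ j ∈ Icc ((k + 1) / 2) (min k K),
    (j : ℝ) ^ (K + 1) * (K.choose j : ℝ) * ((2 * j).choose j : ℝ) * (j.choose (k - j) : ℝ)

theorem abs_gsXi (K k : ℕ) : |gsXi K k| = gsSum K k / K.factorial := by
  have hsum : 0 ≤ gsSum K k := sum_nonneg fun j _ => by positivity
  rw [gsXi, ← gsSum, abs_mul, abs_div, abs_pow, abs_neg, abs_one, one_pow, Nat.abs_cast,
    abs_of_nonneg hsum, one_div_mul_eq_div]

theorem gsSum_one {K : ℕ} (hK : 0 < K) : gsSum K 1 = 2 * K := by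
  simp [gsSum, min_eq_left (Nat.succ_le_of_lt hK), mul_comm]

theorem centralBinom_mul_choose_le_eight_pow (j m : ℕ) :
    (2 * j).choose j * j.choose m ≤ 8 ^ j :=
  calc (2 * j).choose j * j.choose m ≤ 4 ^ j * 2 ^ j :=
        Nat.mul_le_mul (Nat.centralBinom_eq_two_mul_choose j ▸ Nat.centralBinom_le_four_pow j)
          (Nat.choose_le_two_pow j m)
    _ = 8 ^ j := by rw [← mul_pow]; rfl

theorem gsSum_le (K k : ℕ) : gsSum K k ≤ (K : ℝ) ^ (K + 1) * 9 ^ K := by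
  have hterm : ∀ j ∈ Icc ((k + 1) / 2) (min k K),
      (j : ℝ) ^ (K + 1) * (K.choose j : ℝ) * ((2 * j).choose j : ℝ) * (j.choose (k - j) : ℝ) ≤
        (K : ℝ) ^ (K + 1) * (8 ^ j * 1 ^ (K - j) * K.choose j) := by
    intro j hj
    have hjK : j ≤ K := (mem_Icc.mp hj).2.trans (min_le_right k K)
    have h8 : ((2 * j).choose j : ℝ) * (j.choose (k - j) : ℝ) ≤ 8 ^ j := by
      exact_mod_cast centralBinom_mul_choose_le_eight_pow j (k - j)
    calc (j : ℝ) ^ (K + 1) * (K.choose j : ℝ) * ((2 * j).choose j : ℝ) * (j.choose (k - j) : ℝ)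
        = (j : ℝ) ^ (K + 1) * (K.choose j : ℝ) *
            (((2 * j).choose j : ℝ) * (j.choose (k - j) : ℝ)) := by ring
      _ ≤ (K : ℝ) ^ (K + 1) * (K.choose j : ℝ) * 8 ^ j := by gcongr
      _ = (K : ℝ) ^ (K + 1) * (8 ^ j * 1 ^ (K - j) * K.choose j) := by ring
  have hsub : Icc ((k + 1) / 2) (min k K) ⊆ range (K + 1) := fun j hj =>
    mem_range.mpr (Nat.lt_succ_of_le ((mem_Icc.mp hj).2.trans (min_le_right k K)))
  calc gsSum K k
      ≤ ∑ j ∈ Icc ((k + 1) / 2) (min k K),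
          (K : ℝ) ^ (K + 1) * (8 ^ j * 1 ^ (K - j) * K.choose j) := sum_le_sum hterm
    _ ≤ ∑ j ∈ range (K + 1), (K : ℝ) ^ (K + 1) * (8 ^ j * 1 ^ (K - j) * K.choose j) :=
        sum_le_sum_of_subset_of_nonneg hsub fun j _ _ => by positivity
    _ = (K : ℝ) ^ (K + 1) * 9 ^ K := by rw [← mul_sum, ← add_pow]; norm_num

theorem nine_le_two_mul_exp_one_sq : (9 : ℝ) ≤ 2 * exp 1 ^ 2 := by
  nlinarith [exp_one_gt_d9]

theorem gsSum_le_of_pos {K k : ℕ} (hK : 0 < K) (hk : 1 ≤ k) :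
    gsSum K k ≤ ((k : ℝ) / 2) * (K : ℝ) ^ (K + 2) * (2 * exp 1 ^ 2) ^ K := by
  have hK1 : (1 : ℝ) ≤ K := by exact_mod_cast hK
  have he : (9 : ℝ) ^ K ≤ (2 * exp 1 ^ 2) ^ K :=
    pow_le_pow_left₀ (by norm_num) nine_le_two_mul_exp_one_sq K
  obtain rfl | hk2 := hk.eq_or_lt
  · have hKpow : (K : ℝ) ≤ (K : ℝ) ^ (K + 2) := le_self_pow₀ hK1 (by omega)
    have h9 : (9 : ℝ) ≤ 9 ^ K := le_self_pow₀ (by norm_num) hK.ne'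
    rw [gsSum_one hK]
    push_cast
    nlinarith
  · have hkK : (1 : ℝ) ≤ (k : ℝ) / 2 * K := by
      have hk2 : (2 : ℝ) ≤ k := by exact_mod_cast hk2
      nlinarith
    calc gsSum K k ≤ (K : ℝ) ^ (K + 1) * 9 ^ K := gsSum_le K k
      _ ≤ 1 * (K : ℝ) ^ (K + 1) * (2 * exp 1 ^ 2) ^ K := by rw [one_mul]; gcongr
      _ ≤ ((k : ℝ) / 2 * K) * (K : ℝ) ^ (K + 1) * (2 * exp 1 ^ 2) ^ K := by gcongr
      _ = ((k : ℝ) / 2) * (K : ℝ) ^ (K + 2) * (2 * exp 1 ^ 2) ^ K := by ring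

theorem stmt_13_general (K k : ℕ) (hK : 0 < K) (hk1 : 1 ≤ k) :
    |gsXi K k| ≤ (1 / (Nat.factorial K : ℝ)) * ((k : ℝ) / 2) * (K : ℝ) ^ (K + 2) *
      (2 * Real.exp 1 ^ 2) ^ K := by
  rw [abs_gsXi, div_eq_inv_mul, one_div, mul_assoc, mul_assoc, ← mul_assoc ((k : ℝ) / 2)]
  exact mul_le_mul_of_nonneg_left (gsSum_le_of_pos hK hk1) (by positivity)

/-- For every positive integer `K` and every `1 ≤ k ≤ 2K`,
`|ξ_k| ≤ (1/K!)·(k/2)·K^{K+2}·(2e²)^K`. -/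
theorem stmt_13 (K k : ℕ) (hK : 0 < K) (hk1 : 1 ≤ k) (hk2 : k ≤ 2 * K) :
    |gsXi K k| ≤ (1 / (Nat.factorial K : ℝ)) * ((k : ℝ) / 2) * (K : ℝ) ^ (K + 2) *
      (2 * Real.exp 1 ^ 2) ^ K :=
  stmt_13_general K k hK hk1
end

section
/- For every positive integer K, ∑_{k=1}^{2K} |ξ_k|/k ≤ (1/K!)·K^{2K+1}·(2e²)^K. -/
lemma my_choose_le_two_pow (n k : ℕ) : Nat.choose n k ≤ 2 ^ n := by
  rcases le_or_gt k n with h | h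
  · calc Nat.choose n k ≤ ∑ m ∈ Finset.range (n+1), Nat.choose n m :=
        Finset.single_le_sum (fun i _ => Nat.zero_le _) (Finset.mem_range.2 (by omega))
    _ = 2 ^ n := Nat.sum_range_choose n
  · rw [Nat.choose_eq_zero_of_lt h]; exact Nat.zero_le _

lemma my_natlem : ∀ n : ℕ, 2 * 32 ^ (n+3) ≤ (n+3) ^ (n+1) * 29 ^ (n+3) := by
  intro n
  induction n with
  | zero => norm_num
  | succ m ih =>
    calc 2 * 32 ^ (m+4) = 32 * (2 * 32 ^ (m+3)) := by ring
    _ ≤ 32 * ((m+3) ^ (m+1) * 29 ^ (m+3)) := Nat.mul_le_mul_left _ ih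
    _ ≤ (29 * (m+4)) * ((m+3) ^ (m+1) * 29 ^ (m+3)) :=
        Nat.mul_le_mul_right _ (by omega)
    _ ≤ (29 * (m+4)) * ((m+4) ^ (m+1) * 29 ^ (m+3)) :=
        Nat.mul_le_mul_left _ (Nat.mul_le_mul_right _ (Nat.pow_le_pow_left (by omega) _))
    _ = (m+4) ^ (m+2) * 29 ^ (m+4) := by ring

lemma gsXi_abs_le (K k : ℕ) (hk : 1 ≤ k) :
    |gsXi K k| ≤ (1 / (Nat.factorial K : ℝ)) * ((K:ℝ) ^ (K+2) * 16 ^ K) := by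
  have hfac : (0:ℝ) < (Nat.factorial K : ℝ) := by positivity
  have hB : (0:ℝ) ≤ (K:ℝ) ^ (K+1) * 16 ^ K := by positivity
  have hterm : ∀ j ∈ Finset.Icc ((k + 1) / 2) (min k K),
      (j : ℝ) ^ (K + 1) * (Nat.choose K j : ℝ) * (Nat.choose (2 * j) j : ℝ) *
        (Nat.choose j (k - j) : ℝ) ≤ (K:ℝ) ^ (K+1) * 16 ^ K := by
    intro j hj
    rw [Finset.mem_Icc] at hj
    have hjK : j ≤ K := le_trans hj.2 (min_le_right _ _)
    have hnat : j ^ (K+1) * Nat.choose K j * Nat.choose (2*j) j * Nat.choose j (k-j)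
        ≤ K ^ (K+1) * 2 ^ K * 2 ^ (2*K) * 2 ^ K := by
      have h1 : j ^ (K+1) ≤ K ^ (K+1) := Nat.pow_le_pow_left hjK _
      have h2 : Nat.choose K j ≤ 2 ^ K := my_choose_le_two_pow _ _
      have h3 : Nat.choose (2*j) j ≤ 2 ^ (2*K) :=
        le_trans (my_choose_le_two_pow _ _) (Nat.pow_le_pow_right (by norm_num) (by omega))
      have h4 : Nat.choose j (k-j) ≤ 2 ^ K :=
        le_trans (my_choose_le_two_pow _ _) (Nat.pow_le_pow_right (by norm_num) hjK)
      exact Nat.mul_le_mul (Nat.mul_le_mul (Nat.mul_le_mul h1 h2) h3) h4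
    have hcast := (Nat.cast_le (α := ℝ)).2 hnat
    push_cast at hcast
    calc (j : ℝ) ^ (K + 1) * (Nat.choose K j : ℝ) * (Nat.choose (2 * j) j : ℝ) *
        (Nat.choose j (k - j) : ℝ)
        ≤ (K:ℝ) ^ (K+1) * 2 ^ K * 2 ^ (2*K) * 2 ^ K := hcast
      _ = (K:ℝ) ^ (K+1) * 16 ^ K := by
          rw [show (16:ℝ) = 2^4 by norm_num, ← pow_mul]
          ring
  have hsum : ∑ j ∈ Finset.Icc ((k + 1) / 2) (min k K),
      (j : ℝ) ^ (K + 1) * (Nat.choose K j : ℝ) * (Nat.choose (2 * j) j : ℝ) *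
        (Nat.choose j (k - j) : ℝ) ≤ (K:ℝ) ^ (K+2) * 16 ^ K := by
    calc _ ≤ (Finset.Icc ((k + 1) / 2) (min k K)).card • ((K:ℝ) ^ (K+1) * 16 ^ K) :=
          Finset.sum_le_card_nsmul _ _ _ hterm
      _ ≤ (K:ℝ) * ((K:ℝ) ^ (K+1) * 16 ^ K) := by
          rw [nsmul_eq_mul]
          apply mul_le_mul_of_nonneg_right _ hB
          have : (Finset.Icc ((k + 1) / 2) (min k K)).card ≤ K := by
            rw [Nat.card_Icc]; omega
          exact_mod_cast this
      _ = (K:ℝ) ^ (K+2) * 16 ^ K := by ring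
  have hnonneg : (0:ℝ) ≤ ∑ j ∈ Finset.Icc ((k + 1) / 2) (min k K),
      (j : ℝ) ^ (K + 1) * (Nat.choose K j : ℝ) * (Nat.choose (2 * j) j : ℝ) *
        (Nat.choose j (k - j) : ℝ) :=
    Finset.sum_nonneg fun j _ => by positivity
  rw [gsXi, abs_mul, abs_div, abs_pow, abs_neg, abs_one, one_pow, abs_of_pos hfac,
    abs_of_nonneg hnonneg]
  rw [div_mul_eq_mul_div, one_mul, div_mul_eq_mul_div, one_mul]
  exact div_le_div_of_nonneg_right hsum hfac.le

/-- For every positive integer `K`,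
`∑_{k=1}^{2K} |ξ_k|/k ≤ (1/K!)·K^{2K+1}·(2e²)^K`. -/
theorem stmt_14 (K : ℕ) (hK : 0 < K) :
    ∑ k ∈ Finset.Icc 1 (2 * K), |gsXi K k| / (k : ℝ) ≤
      (1 / (Nat.factorial K : ℝ)) * (K : ℝ) ^ (2 * K + 1) *
        (2 * Real.exp 1 ^ 2) ^ K := by
  have he : (29:ℝ)/2 ≤ 2 * Real.exp 1 ^ 2 := by
    have h := Real.exp_one_gt_d9
    nlinarith [Real.exp_pos 1]
  match K, hK with
  | 1, _ =>
    have hL : ∑ k ∈ Finset.Icc 1 (2*1), |gsXi 1 k| / (k:ℝ) = 3 := by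
      norm_num [gsXi, Finset.sum_Icc_succ_top, Finset.Icc_self, Nat.choose]
    have hR : (1 / (Nat.factorial 1 : ℝ)) * ((1:ℕ) : ℝ) ^ (2*1+1) * (2 * Real.exp 1 ^ 2) ^ 1
        = 2 * Real.exp 1 ^ 2 := by
      norm_num [Nat.factorial]
    rw [hL, hR]; linarith
  | 2, _ =>
    have hL : ∑ k ∈ Finset.Icc 1 (2*2), |gsXi 2 k| / (k:ℝ) = 37 := by
      norm_num [gsXi, Finset.sum_Icc_succ_top, Finset.Icc_self, Nat.choose]
    have hR : (1 / (Nat.factorial 2 : ℝ)) * ((2:ℕ) : ℝ) ^ (2*2+1) * (2 * Real.exp 1 ^ 2) ^ 2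
        = 16 * (2 * Real.exp 1 ^ 2) ^ 2 := by
      norm_num [Nat.factorial]
    rw [hL, hR]
    nlinarith [Real.exp_pos 1, he]
  | (n+3), _ =>
    set K := n + 3 with hKdef
    have hfac : (0:ℝ) < (Nat.factorial K : ℝ) := by positivity
    have h1 : ∑ k ∈ Finset.Icc 1 (2*K), |gsXi K k| / (k:ℝ) ≤
        (2*K : ℝ) * ((1 / (Nat.factorial K : ℝ)) * ((K:ℝ) ^ (K+2) * 16 ^ K)) := by
      calc ∑ k ∈ Finset.Icc 1 (2*K), |gsXi K k| / (k:ℝ)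
          ≤ ∑ _k ∈ Finset.Icc 1 (2*K),
              (1 / (Nat.factorial K : ℝ)) * ((K:ℝ) ^ (K+2) * 16 ^ K) := by
            apply Finset.sum_le_sum
            intro k hk
            rw [Finset.mem_Icc] at hk
            have h1k : (1:ℝ) ≤ (k:ℝ) := by exact_mod_cast hk.1
            exact le_trans (div_le_self (abs_nonneg _) h1k) (gsXi_abs_le K k hk.1)
        _ = (2*K : ℝ) * ((1 / (Nat.factorial K : ℝ)) * ((K:ℝ) ^ (K+2) * 16 ^ K)) := by
            rw [Finset.sum_const, Nat.card_Icc, nsmul_eq_mul]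
            norm_num
    refine le_trans h1 ?_
    have key : (2*K : ℝ) * ((K:ℝ) ^ (K+2) * 16 ^ K) ≤ (K:ℝ) ^ (2*K+1) * (2 * Real.exp 1 ^ 2) ^ K := by
      have hnat := my_natlem n
      have hcast : (2:ℝ) * 32 ^ K ≤ (K:ℝ) ^ (n+1) * 29 ^ K := by exact_mod_cast hnat
      have hstep : (2:ℝ) * 16 ^ K ≤ (K:ℝ) ^ (n+1) * (2 * Real.exp 1 ^ 2) ^ K := by
        have h2 : ((29:ℝ)/2) ^ K ≤ (2 * Real.exp 1 ^ 2) ^ K :=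
          pow_le_pow_left₀ (by norm_num) he K
        have h3 : (2:ℝ) * 16 ^ K ≤ (K:ℝ) ^ (n+1) * ((29:ℝ)/2) ^ K := by
          rw [div_pow, ← mul_div_assoc, le_div_iff₀ (by positivity)]
          calc (2:ℝ) * 16 ^ K * 2 ^ K = 2 * (16 * 2) ^ K := by rw [mul_pow]; ring
            _ = 2 * 32 ^ K := by norm_num
            _ ≤ (K:ℝ) ^ (n+1) * 29 ^ K := hcast
        exact le_trans h3 (mul_le_mul_of_nonneg_left h2 (by positivity))
      calc (2*K : ℝ) * ((K:ℝ) ^ (K+2) * 16 ^ K)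
          = (K:ℝ) ^ (K+3) * (2 * 16 ^ K) := by ring
        _ ≤ (K:ℝ) ^ (K+3) * ((K:ℝ) ^ (n+1) * (2 * Real.exp 1 ^ 2) ^ K) :=
            mul_le_mul_of_nonneg_left hstep (by positivity)
        _ = (K:ℝ) ^ (2*K+1) * (2 * Real.exp 1 ^ 2) ^ K := by
            rw [← mul_assoc, ← pow_add]
            congr 2
            omega
    calc (2*K : ℝ) * ((1 / (Nat.factorial K : ℝ)) * ((K:ℝ) ^ (K+2) * 16 ^ K))
        = (1 / (Nat.factorial K : ℝ)) * ((2*K : ℝ) * ((K:ℝ) ^ (K+2) * 16 ^ K)) := by ring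
      _ ≤ (1 / (Nat.factorial K : ℝ)) * ((K:ℝ) ^ (2*K+1) * (2 * Real.exp 1 ^ 2) ^ K) :=
          mul_le_mul_of_nonneg_left key (by positivity)
      _ = (1 / (Nat.factorial K : ℝ)) * (K : ℝ) ^ (2 * K + 1) * (2 * Real.exp 1 ^ 2) ^ K := by ring
end
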